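/- arXiv:2207.08137 — 2 statements merged into one kernel-verified Lean document; each statement's English description precedes it below -/
import Mathlib

section
/- Let S_L and S_F be nonempty compact metric spaces and φ : S_L × S_F → ℝ continuous. Define γ(s_l) = argmax_{s_f ∈ S_F} φ(s_l, s_f) and Γ = {(s_l, s_f) : s_f ∈ γ(s_l)}. Then there exists a Stackelberg equilibrium, i.e., a pair (s_l*, s_f*) ∈ Γ such that φ(s_l*, s_f*) ≤ φ(s_l, s_f) for all (s_l, s_f) ∈ Γ. -/
/-- Existence of a Stackelberg equilibrium for a continuous payoff on nonempty compact
metric strategy spaces: there is a pair `(s_l*, s_f*)` in the graph `Γ` of the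
best-response correspondence `γ(s_l) = argmax_{s_f} φ(s_l, s_f)` minimizing `φ` over `Γ`. -/
theorem stackelberg_equilibrium_exists
    {SL SF : Type*} [MetricSpace SL] [CompactSpace SL] [Nonempty SL]
    [MetricSpace SF] [CompactSpace SF] [Nonempty SF]
    (φ : SL × SF → ℝ) (hφ : Continuous φ) :
    ∃ p : SL × SF,
      (∀ sf : SF, φ (p.1, sf) ≤ φ p) ∧
      (∀ q : SL × SF, (∀ sf : SF, φ (q.1, sf) ≤ φ q) → φ p ≤ φ q) := by
  set Γ : Set (SL × SF) := {q | ∀ sf : SF, φ (q.1, sf) ≤ φ q} with hΓ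
  have hclosed : IsClosed Γ := by
    have : Γ = ⋂ sf : SF, {q : SL × SF | φ (q.1, sf) ≤ φ q} := by
      ext q; simp [hΓ]
    rw [this]
    exact isClosed_iInter fun sf =>
      isClosed_le (hφ.comp (by continuity)) hφ
  have hne : Γ.Nonempty := by
    obtain ⟨sl⟩ := ‹Nonempty SL›
    obtain ⟨sf, -, hsf⟩ := IsCompact.exists_isMaxOn isCompact_univ Set.univ_nonempty
      (Continuous.continuousOn (hφ.comp (by continuity : Continuous fun sf : SF => (sl, sf))))
    exact ⟨(sl, sf), fun sf' => hsf (Set.mem_univ sf')⟩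
  obtain ⟨p, hpΓ, hmin⟩ := IsCompact.exists_isMinOn (hclosed.isCompact) hne
    hφ.continuousOn
  exact ⟨p, hpΓ, fun q hq => hmin hq⟩
end

section
/- Let φ_s, φ_0 : S_c × S_a → ℝ and φ_t = φ_s + λ·φ_0 with λ > 0, where φ_0(Θ, A) depends only on Θ (write φ_0(Θ)). Suppose Θ_s* minimizes Θ ↦ max_{A} φ_s(Θ, A) with A_s* ∈ argmax_A φ_s(Θ_s*, A), and Θ_t* minimizes Θ ↦ max_A φ_t(Θ, A) with A_t* ∈ argmax_A φ_t(Θ_t*, A), all maxima and minima being attained. Then φ_s(Θ_s*, A_s*) ≤ φ_s(Θ_t*, A_t*) and φ_0(Θ_s*) ≥ φ_0(Θ_t*). -/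
/-- Trade-off between robustness and accuracy: let `φ_t(Θ,A) = φ_s(Θ,A) + λ·φ_0(Θ)`
with `λ > 0`.  If `(Θ_s*, A_s*)` is a Stackelberg equilibrium for `φ_s` (i.e. `A_s*`
maximizes `φ_s(Θ_s*, ·)` and `Θ_s*` minimizes the attained max) and `(Θ_t*, A_t*)` is
a Stackelberg equilibrium for `φ_t`, then `φ_s(Θ_s*,A_s*) ≤ φ_s(Θ_t*,A_t*)` and
`φ_0(Θ_s*) ≥ φ_0(Θ_t*)`: the `φ_s`-equilibrium network is more robust but less
accurate. -/
theorem robustness_accuracy_tradeoff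
    {Sc Sa : Type*} [Nonempty Sc] [Nonempty Sa]
    (φs : Sc → Sa → ℝ) (φ0 : Sc → ℝ) (lam : ℝ) (hlam : 0 < lam)
    (φt : Sc → Sa → ℝ) (hφt : ∀ Θ A, φt Θ A = φs Θ A + lam * φ0 Θ)
    (Θs : Sc) (As : Sa) (Θt : Sc) (At : Sa)
    (hAs : ∀ A : Sa, φs Θs A ≤ φs Θs As)
    (hΘs : ∀ Θ : Sc, ∀ A : Sa, (∀ A' : Sa, φs Θ A' ≤ φs Θ A) → φs Θs As ≤ φs Θ A)
    (hAt : ∀ A : Sa, φt Θt A ≤ φt Θt At)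
    (hΘt : ∀ Θ : Sc, ∀ A : Sa, (∀ A' : Sa, φt Θ A' ≤ φt Θ A) → φt Θt At ≤ φt Θ A) :
    φs Θs As ≤ φs Θt At ∧ φ0 Θt ≤ φ0 Θs := by
  have hAt' : ∀ A : Sa, φs Θt A ≤ φs Θt At := by
    intro A; have := hAt A; simp only [hφt] at this; linarith
  have h1 : φs Θs As ≤ φs Θt At := hΘs Θt At hAt'
  have hAs' : ∀ A : Sa, φt Θs A ≤ φt Θs As := by
    intro A; simp only [hφt]; linarith [hAs A]
  have h2 : φt Θt At ≤ φt Θs As := hΘt Θs As hAs'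
  simp only [hφt] at h2
  exact ⟨h1, by nlinarith⟩
end
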